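/- Let S be a positive semidefinite block Toeplitz matrix with q×q blocks, each block of size t×t, and suppose rank(S) = r. Then there exist frequencies f_1,...,f_r ∈ [0,1) and vectors g_1,...,g_r ∈ ℂ^t such that S = Σ_{j=1}^r (u_q(f_j) ⊗ g_j)(u_q(f_j) ⊗ g_j)*, where u_q(f) ∈ ℂ^q has entries e^{2πi a f}, a = 0,...,q−1; moreover the a-th block diagonal of S equals G · diag(e^{2πi a f_1},...,e^{2πi a f_r}) · G*, where G = [g_1,...,g_r]. -/

import Mathlib

/-!
Factor `Sᵀ` as the Gram matrix of vectors `w (a, i)` in a space `E` of dimension `r = rank S`.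
Block Toeplitz structure says that the families `(w (a, i))` and `(w (a + 1, i))` have the same
Gram matrix, so a single isometry `T` of `E` maps the first to the second, giving
`w (a, i) = T ^ a (w (0, i))`. Since `T` is unitary it has an orthonormal eigenbasis with
unimodular eigenvalues `e^{2πi f_l}`; expanding `w (0, i)` in this basis gives the
`r`-term decomposition.
-/

open Complex
open scoped ComplexOrder

/-- The Vandermonde (steering) vector `v(f) ∈ ℂ^n`, `v(f)_j = e^{2πi j f}`. -/
noncomputable def vand (n : ℕ) (f : ℝ) : Fin n → ℂ :=
  fun j => Complex.exp (2 * Real.pi * Complex.I * (j.val : ℂ) * (f : ℂ))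

open Matrix Module
open scoped InnerProductSpace

section Gram

variable {𝕜 E ι : Type*} [RCLike 𝕜] [NormedAddCommGroup E] [InnerProductSpace 𝕜 E] [Fintype ι]

theorem norm_linearCombination_eq_of_gram_eq {x y : ι → E} (h : gram 𝕜 x = gram 𝕜 y) (z : ι → 𝕜) :
    ‖Fintype.linearCombination 𝕜 x z‖ = ‖Fintype.linearCombination 𝕜 y z‖ := by
  have h_inner : ⟪∑ i, z i • x i, ∑ i, z i • x i⟫_𝕜 = ⟪∑ i, z i • y i, ∑ i, z i • y i⟫_𝕜 := by
    rw [← star_dotProduct_gram_mulVec, ← star_dotProduct_gram_mulVec, h]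
  simp only [Fintype.linearCombination_apply, norm_eq_sqrt_re_inner (𝕜 := 𝕜), h_inner]

variable [FiniteDimensional 𝕜 E]

theorem exists_linearIsometry_apply_eq_of_gram_eq {x y : ι → E} (h : gram 𝕜 x = gram 𝕜 y) :
    ∃ T : E →ₗᵢ[𝕜] E, ∀ i, T (x i) = y i := by
  classical
  set Lx := Fintype.linearCombination 𝕜 x
  set Ly := Fintype.linearCombination 𝕜 y
  have hker : LinearMap.ker Lx ≤ LinearMap.ker Ly := fun z hz => by
    rw [LinearMap.mem_ker, ← norm_eq_zero, ← norm_linearCombination_eq_of_gram_eq h, norm_eq_zero]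
    exact hz
  set φ : LinearMap.range Lx →ₗ[𝕜] E :=
    (LinearMap.ker Lx).liftQ Ly hker ∘ₗ Lx.quotKerEquivRange.symm.toLinearMap
  have hφ : ∀ z, φ ⟨Lx z, LinearMap.mem_range_self Lx z⟩ = Ly z := fun z => by
    simp [φ, LinearMap.quotKerEquivRange_symm_apply_image]
  have hφ_norm : ∀ s, ‖φ s‖ = ‖s‖ := by
    rintro ⟨_, z, rfl⟩
    rw [hφ, ← norm_linearCombination_eq_of_gram_eq h, Submodule.coe_norm]
  let Φ : LinearMap.range Lx →ₗᵢ[𝕜] E := ⟨φ, hφ_norm⟩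
  refine ⟨Φ.extend, fun i => ?_⟩
  have hx : x i = Lx (Pi.single i 1) := by
    simp only [Lx, Fintype.linearCombination_apply_single, one_smul]
  have hy : y i = Ly (Pi.single i 1) := by
    simp only [Ly, Fintype.linearCombination_apply_single, one_smul]
  calc Φ.extend (x i) = Φ.extend (Lx (Pi.single i 1)) := by rw [hx]
    _ = Φ ⟨Lx (Pi.single i 1), LinearMap.mem_range_self Lx _⟩ :=
        Φ.extend_apply ⟨Lx (Pi.single i 1), LinearMap.mem_range_self Lx _⟩
    _ = y i := (hφ _).trans hy.symm

end Gram

open scoped MatrixOrder in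
theorem Matrix.PosSemidef.exists_eq_gram {𝕜 n : Type*} [RCLike 𝕜] [Fintype n] [DecidableEq n]
    {S : Matrix n n 𝕜} (hS : S.PosSemidef) :
    ∃ w : n → EuclideanSpace 𝕜 (Fin S.rank), S = gram 𝕜 w := by
  obtain ⟨B, rfl⟩ := CStarAlgebra.nonneg_iff_eq_star_mul_self.mp hS.nonneg
  let v : n → EuclideanSpace 𝕜 n := fun p => WithLp.toLp 2 (B.col p)
  have h_gram : star B * B = gram 𝕜 v := by
    ext p p'
    simp [v, gram_apply, mul_apply, EuclideanSpace.inner_toLp_toLp, dotProduct, mul_comm]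
  set V := Submodule.span 𝕜 (Set.range v)
  have hV : finrank 𝕜 V = (star B * B).rank := by
    rw [star_eq_conjTranspose, rank_conjTranspose_mul_self, rank_eq_finrank_span_cols,
      ← (WithLp.linearEquiv 2 𝕜 (n → 𝕜)).symm.finrank_map_eq, ← Submodule.span_image,
      ← Set.range_comp]
    rfl
  let e := ((stdOrthonormalBasis 𝕜 V).reindex (finCongr hV)).repr
  refine ⟨fun p => e ⟨v p, Submodule.subset_span ⟨p, rfl⟩⟩, ?_⟩
  ext p p'
  simp [h_gram, gram_apply]

section Isometry

variable {𝕜 E : Type*} [RCLike 𝕜] [NormedAddCommGroup E] [InnerProductSpace 𝕜 E]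

theorem LinearIsometry.norm_eq_one_of_apply_eq_smul (T : E →ₗᵢ[𝕜] E) {v : E} {μ : 𝕜}
    (hv : v ≠ 0) (h : T v = μ • v) : ‖μ‖ = 1 := by
  have h_norm := T.norm_map v
  rwa [h, norm_smul, mul_eq_right₀ (norm_ne_zero_iff.mpr hv)] at h_norm

theorem LinearIsometry.mapsTo_orthogonal_span_singleton (T : E →ₗᵢ[𝕜] E) {v : E} {μ : 𝕜}
    (hv : v ≠ 0) (h : T v = μ • v) : Set.MapsTo T (𝕜 ∙ v)ᗮ (𝕜 ∙ v)ᗮ := by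
  intro z hz
  rw [SetLike.mem_coe, Submodule.mem_orthogonal_singleton_iff_inner_right] at hz ⊢
  have hμ : starRingEnd 𝕜 μ ≠ 0 := by
    rw [map_ne_zero, ← norm_ne_zero_iff, T.norm_eq_one_of_apply_eq_smul hv h]
    exact one_ne_zero
  have h_inner := T.inner_map_map v z
  rw [h, inner_smul_left, hz, mul_eq_zero] at h_inner
  exact h_inner.resolve_left hμ

theorem orthonormal_fin_cons {n : ℕ} {v : E} {u : Fin n → E} (hv : ‖v‖ = 1)
    (hu : Orthonormal 𝕜 u) (hvu : ∀ l, ⟪v, u l⟫_𝕜 = 0) :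
    Orthonormal 𝕜 (Fin.cons v u : Fin (n + 1) → E) := by
  refine ⟨Fin.forall_fin_succ.mpr ⟨by simpa using hv, fun l => by simpa using hu.1 l⟩, ?_⟩
  refine Fin.forall_fin_succ.mpr ⟨Fin.forall_fin_succ.mpr ⟨by simp, ?_⟩, ?_⟩
  · intro l _
    simpa using hvu l
  · intro l
    refine Fin.forall_fin_succ.mpr ⟨fun _ => ?_, fun l' hll' => ?_⟩
    · simpa [inner_eq_zero_symm] using hvu l
    · simpa using hu.2 (ne_of_apply_ne Fin.succ hll')

end Isometry

section Unitary

variable {E : Type*} [NormedAddCommGroup E] [InnerProductSpace ℂ E] [FiniteDimensional ℂ E]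

theorem LinearIsometry.exists_orthonormal_eigenvectors {n : ℕ} (hn : finrank ℂ E = n)
    (T : E →ₗᵢ[ℂ] E) :
    ∃ (v : Fin n → E) (μ : Fin n → ℂ), Orthonormal ℂ v ∧ ∀ l, T (v l) = μ l • v l := by
  induction n generalizing E with
  | zero => exact ⟨Fin.elim0, Fin.elim0, ⟨fun l => l.elim0, fun l => l.elim0⟩, fun l => l.elim0⟩
  | succ n ih =>
    have : Nontrivial E := Module.nontrivial_of_finrank_eq_succ hn
    obtain ⟨μ, hμ⟩ := Module.End.exists_eigenvalue T.toLinearMap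
    obtain ⟨v, hv⟩ := hμ.exists_hasEigenvector
    have hTv : T v = μ • v := hv.apply_eq_smul
    have : Fact (finrank ℂ E = n + 1) := ⟨hn⟩
    set K := (ℂ ∙ v)ᗮ
    let TK : K →ₗᵢ[ℂ] K :=
      { toLinearMap := T.toLinearMap.restrict (T.mapsTo_orthogonal_span_singleton hv.2 hTv)
        norm_map' := fun z => T.norm_map z }
    obtain ⟨u, ν, hu, hTu⟩ := ih (Submodule.finrank_orthogonal_span_singleton hv.2) TK
    refine ⟨Fin.cons ((‖v‖⁻¹ : ℂ) • v) (fun l => u l), Fin.cons μ ν,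
      orthonormal_fin_cons ?_ (hu.comp_linearIsometry K.subtypeₗᵢ) fun l => ?_, ?_⟩
    · simp [norm_smul, hv.2]
    · rw [inner_smul_left, Submodule.mem_orthogonal_singleton_iff_inner_right.mp (u l).2,
        mul_zero]
    · refine Fin.forall_fin_succ.mpr ⟨?_, fun l => ?_⟩
      · simp [hTv, smul_comm μ]
      · simp only [Fin.cons_succ]
        exact congrArg Subtype.val (hTu l)

theorem LinearIsometry.exists_orthonormalBasis_eigenvectors {n : ℕ} (hn : finrank ℂ E = n)
    (T : E →ₗᵢ[ℂ] E) :
    ∃ (b : OrthonormalBasis (Fin n) ℂ E) (μ : Fin n → ℂ), ∀ l, T (b l) = μ l • b l := by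
  obtain ⟨v, μ, hv, hTv⟩ := T.exists_orthonormal_eigenvectors hn
  have h_span := hv.linearIndependent.span_eq_top_of_card_eq_finrank' (by simp [hn])
  exact ⟨OrthonormalBasis.mk hv h_span.ge, μ, fun l => by simpa using hTv l⟩

end Unitary

section Expansion

variable {𝕜 E ι : Type*} [RCLike 𝕜] [NormedAddCommGroup E] [InnerProductSpace 𝕜 E] [Fintype ι]
  {f : Module.End 𝕜 E} {μ : ι → 𝕜}

theorem OrthonormalBasis.pow_apply_eq_sum (b : OrthonormalBasis ι 𝕜 E)
    (hf : ∀ l, f (b l) = μ l • b l) (m : ℕ) (x : E) :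
    (f ^ m) x = ∑ l, (μ l ^ m * ⟪b l, x⟫_𝕜) • b l := by
  have h_pow : ∀ l, (f ^ m) (b l) = μ l ^ m • b l := fun l =>
    (Module.End.hasEigenvector_iff.mpr ⟨Module.End.mem_eigenspace_iff.mpr (hf l),
      b.orthonormal.ne_zero l⟩).pow_apply m
  conv_lhs => rw [← b.sum_repr' x]
  simp only [map_sum, map_smul, h_pow, smul_smul, mul_comm]

theorem OrthonormalBasis.inner_pow_apply_pow_apply (b : OrthonormalBasis ι 𝕜 E)
    (hf : ∀ l, f (b l) = μ l • b l) (m m' : ℕ) (x y : E) :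
    ⟪(f ^ m) x, (f ^ m') y⟫_𝕜 =
      ∑ l, starRingEnd 𝕜 (μ l ^ m * ⟪b l, x⟫_𝕜) * (μ l ^ m' * ⟪b l, y⟫_𝕜) := by
  rw [b.pow_apply_eq_sum hf, b.pow_apply_eq_sum hf, b.orthonormal.inner_sum]

end Expansion

theorem Module.End.pow_val_apply_eq_of_apply_eq_succ {R M : Type*} [Semiring R] [AddCommMonoid M]
    [Module R M] {f : Module.End R M} {q : ℕ} {x : Fin q → M}
    (h : ∀ a b : Fin q, b.val = a.val + 1 → f (x a) = x b) (a₀ a : Fin q) (h₀ : a₀.val = 0) :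
    (f ^ a.val) (x a₀) = x a := by
  obtain ⟨a, ha⟩ := a
  induction a with
  | zero => simpa using congrArg x (Fin.ext h₀)
  | succ k ih =>
    rw [pow_succ', Module.End.mul_apply, ih (by omega), h ⟨k, by omega⟩ ⟨k + 1, ha⟩ rfl]

theorem exists_eq_sum_pow_of_inner_toeplitz {E ι : Type*} [NormedAddCommGroup E]
    [InnerProductSpace ℂ E] [FiniteDimensional ℂ E] [Fintype ι] {n q : ℕ}
    (hn : finrank ℂ E = n) (w : Fin q → ι → E)
    (hw : ∀ (a b a' b' : Fin q) (i j : ι), (a : ℤ) - b = (a' : ℤ) - b' →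
      ⟪w a i, w b j⟫_ℂ = ⟪w a' i, w b' j⟫_ℂ) :
    ∃ (ζ : Fin n → ℂ) (c : Fin n → ι → ℂ), (∀ l, ‖ζ l‖ = 1) ∧
      ∀ a b i j, ⟪w b j, w a i⟫_ℂ =
        ∑ l, (ζ l ^ a.val * c l i) * starRingEnd ℂ (ζ l ^ b.val * c l j) := by
  rcases q with _ | q
  · exact ⟨1, 0, by simp, fun a => a.elim0⟩
  let SuccPair := {p : Fin (q + 1) × Fin (q + 1) // p.2.val = p.1.val + 1}
  let x : SuccPair × ι → E := fun p => w p.1.1.1 p.2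
  let y : SuccPair × ι → E := fun p => w p.1.1.2 p.2
  have h_gram : gram ℂ x = gram ℂ y := by
    ext ⟨⟨⟨a, b⟩, hab⟩, i⟩ ⟨⟨⟨a', b'⟩, hab'⟩, j⟩
    exact hw _ _ _ _ i j (by dsimp only at hab hab' ⊢; omega)
  obtain ⟨T, hT⟩ := exists_linearIsometry_apply_eq_of_gram_eq h_gram
  obtain ⟨e, μ, hTe⟩ := T.exists_orthonormalBasis_eigenvectors hn
  have h_shift : ∀ a i, (T.toLinearMap ^ a.val) (w 0 i) = w a i := fun a i =>
    Module.End.pow_val_apply_eq_of_apply_eq_succ (x := (w · i))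
      (fun a b hab => hT ⟨⟨(a, b), hab⟩, i⟩) 0 a rfl
  refine ⟨μ, fun l i => ⟪e l, w 0 i⟫_ℂ,
    fun l => T.norm_eq_one_of_apply_eq_smul (e.orthonormal.ne_zero l) (hTe l), fun a b i j => ?_⟩
  rw [← h_shift a, ← h_shift b, e.inner_pow_apply_pow_apply hTe]
  exact Finset.sum_congr rfl fun l _ => mul_comm _ _

theorem exists_mem_Ico_exp_two_pi_mul_I_eq {z : ℂ} (hz : ‖z‖ = 1) :
    ∃ f ∈ Set.Ico (0 : ℝ) 1, Complex.exp (2 * Real.pi * Complex.I * f) = z := by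
  have hper : Function.Periodic (fun f : ℝ => Complex.exp (2 * Real.pi * Complex.I * f)) 1 :=
    fun f => by simpa [mul_add] using Complex.exp_periodic (2 * Real.pi * Complex.I * f)
  obtain ⟨f, hf, he⟩ := hper.exists_mem_Ico₀ one_pos (z.arg / (2 * Real.pi))
  refine ⟨f, hf, ?_⟩
  rw [← he]
  have h_arg := Complex.norm_mul_exp_arg_mul_I z
  rw [hz, Complex.ofReal_one, one_mul] at h_arg
  convert h_arg using 2
  push_cast
  field_simp

theorem vand_apply_eq_pow (n : ℕ) (f : ℝ) (j : Fin n) :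
    vand n f j = Complex.exp (2 * Real.pi * Complex.I * f) ^ j.val := by
  rw [vand, ← Complex.exp_nat_mul]
  ring_nf

theorem vand_mul_conj_vand (n : ℕ) (f : ℝ) (j k : Fin n) :
    vand n f j * starRingEnd ℂ (vand n f k) =
      Complex.exp (2 * Real.pi * Complex.I * (((j : ℤ) - k : ℤ) : ℂ) * f) := by
  rw [vand, vand, ← Complex.exp_conj, ← Complex.exp_add]
  congr 1
  simp [Complex.conj_ofReal, map_ofNat]
  ring

/-- Decomposition of a PSD block Toeplitz matrix (Yang et al. / Gurvits–Barnum style):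
there exist frequencies and vectors so that the matrix is a sum of outer products of
Kronecker products of 1D steering vectors with the vectors, and each block diagonal has
the stated form. -/
theorem psd_blockToeplitz_decomposition (q t r : ℕ)
    (S : Matrix (Fin q × Fin t) (Fin q × Fin t) ℂ)
    (hpsd : S.PosSemidef)
    (hbt : ∀ (a b a' b' : Fin q) (i j : Fin t),
      ((a.val : ℤ) - (b.val : ℤ) = (a'.val : ℤ) - (b'.val : ℤ)) →
      S (a, i) (b, j) = S (a', i) (b', j))
    (hrank : S.rank = r) :
    ∃ (f : Fin r → ℝ) (g : Fin r → Fin t → ℂ),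
      (∀ k, f k ∈ Set.Ico (0 : ℝ) 1) ∧
      (∀ (a b : Fin q) (i j : Fin t),
        S (a, i) (b, j) =
          ∑ k, (vand q (f k) a * g k i) * (starRingEnd ℂ) (vand q (f k) b * g k j)) ∧
      (∀ (d : ℤ) (a b : Fin q) (i j : Fin t), (a.val : ℤ) - (b.val : ℤ) = d →
        S (a, i) (b, j) =
          ∑ k, Complex.exp (2 * Real.pi * Complex.I * (d : ℂ) * (f k : ℂ)) *
            g k i * (starRingEnd ℂ) (g k j)) := by
  -- Factoring `Sᵀ` rather than `S` makes `S (a, i) (b, j)` linear in the `(a, i)` slot.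
  obtain ⟨w, hw⟩ := hpsd.transpose.exists_eq_gram
  have hS : ∀ a b i j, S (a, i) (b, j) = ⟪w (b, j), w (a, i)⟫_ℂ := fun a b i j => by
    rw [← gram_apply, ← hw, transpose_apply]
  obtain ⟨ζ, c, hζ, h_decomp⟩ := exists_eq_sum_pow_of_inner_toeplitz (n := r)
    (by simp [rank_transpose, hrank]) (fun a i => w (a, i))
    (fun a b a' b' i j hd => by rw [← hS, ← hS]; exact hbt b a b' a' j i (by omega))
  choose f hf hfζ using fun l => exists_mem_Ico_exp_two_pi_mul_I_eq (hζ l)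
  have h_sum : ∀ a b i j, S (a, i) (b, j) =
      ∑ l, (vand q (f l) a * c l i) * starRingEnd ℂ (vand q (f l) b * c l j) := by
    intro a b i j
    simp only [hS, h_decomp, vand_apply_eq_pow, hfζ]
  refine ⟨f, c, hf, h_sum, fun d a b i j hd => ?_⟩
  rw [h_sum, ← hd]
  refine Finset.sum_congr rfl fun l _ => ?_
  rw [← vand_mul_conj_vand, map_mul]
  ring
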